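/- arXiv:2512.20602 — 4 statements merged into one kernel-verified Lean document; each statement's English description precedes it below -/
import Mathlib

section
/- Under the two-sided quadratic model error bound F(x) − M(x) ≤ (L_U/2)‖x − x_k‖² for all x, if x⁺ minimizes x ↦ M(x) + (1/2)‖x − x_k‖²_Q over ℝ^m with Q positive definite, σ = λ_min(Q), and σ ≥ L_U/(2 − α₁) with α₁ ∈ (0,1), then the ratio ρ = (F(x_k) − F(x⁺)) / (F(x_k) − M(x⁺) − (1/2)‖x⁺ − x_k‖²_Q) satisfies ρ ≥ α₁ (assuming the denominator is positive). -/
/-! Testing the minimality of `x⁺` against the points `x_k + t (x⁺ - x_k)`, `0 ≤ t < 1`, where the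
quadratic term scales by `t²` while convexity makes `M` at most linear in `t`, and letting `t → 1`
gives `M x⁺ + ‖x⁺ - x_k‖²_Q ≤ M x_k`, i.e. `Pred ≥ ½ ‖x⁺ - x_k‖²_Q`. Since `L_U ≤ (2 - α₁) σ`,
the model error at `x⁺` is at most `(2 - α₁)/2 ‖x⁺ - x_k‖²_Q`, so
`Act ≥ Pred - (1 - α₁)/2 ‖x⁺ - x_k‖²_Q ≥ α₁ Pred`. -/

open Set

open scoped RealInnerProductSpace

lemma le_of_forall_mem_Ico_mul_le {a c : ℝ} (h : ∀ t ∈ Ico (0 : ℝ) 1, t * a ≤ c) : a ≤ c := by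
  have hclosed : IsClosed {t : ℝ | t * a ≤ c} := isClosed_le (by fun_prop) (by fun_prop)
  have h1 : (1 : ℝ) ∈ closure (Ico 0 1) := by
    rw [closure_Ico zero_ne_one]
    exact ⟨zero_le_one, le_rfl⟩
  simpa using hclosed.closure_subset_iff.2 h h1

section Prox

variable {E : Type*} [NormedAddCommGroup E] [InnerProductSpace ℝ E]

lemma inner_map_smul_smul (Q : E →ₗ[ℝ] E) (t : ℝ) (u : E) :
    ⟪Q (t • u), t • u⟫ = t ^ 2 * ⟪Q u, u⟫ := by
  rw [map_smul, real_inner_smul_left, real_inner_smul_right]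
  ring

lemma ConvexOn.add_inner_le_of_forall_prox_le {M : E → ℝ} (hM : ConvexOn ℝ univ M)
    (Q : E →ₗ[ℝ] E) {xk xplus : E}
    (hmin : ∀ x, M xplus + 1 / 2 * ⟪Q (xplus - xk), xplus - xk⟫
      ≤ M x + 1 / 2 * ⟪Q (x - xk), x - xk⟫) :
    M xplus + ⟪Q (xplus - xk), xplus - xk⟫ ≤ M xk := by
  set q := ⟪Q (xplus - xk), xplus - xk⟫
  suffices q / 2 ≤ M xk - M xplus - q / 2 by linarith
  refine le_of_forall_mem_Ico_mul_le fun t ⟨ht0, ht1⟩ ↦ ?_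
  set y := t • xplus + (1 - t) • xk
  have hy : y - xk = t • (xplus - xk) := by module
  have hconv : M y ≤ t * M xplus + (1 - t) * M xk :=
    hM.2 (mem_univ _) (mem_univ _) ht0 (by linarith) (by ring)
  have hcompare := hmin y
  rw [hy, inner_map_smul_smul] at hcompare
  -- `hconv` and `hcompare` give `(1 - t) * (M xplus + (1 + t) * q / 2) ≤ (1 - t) * M xk`.
  have key : (1 - t) * (t * (q / 2)) ≤ (1 - t) * (M xk - M xplus - q / 2) := by nlinarith
  exact le_of_mul_le_mul_left key (by linarith)

end Prox

theorem stmt4_general {m : ℕ}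
    (F M : EuclideanSpace ℝ (Fin m) → ℝ)
    (Q : EuclideanSpace ℝ (Fin m) →L[ℝ] EuclideanSpace ℝ (Fin m))
    (xk xplus : EuclideanSpace ℝ (Fin m)) (LU σ α₁ : ℝ)
    (hσmin : ∀ u, σ * ‖u‖ ^ 2 ≤ (inner ℝ (Q u) u : ℝ))   -- σ = λ_min(Q) lower bound
    (hMconv : ConvexOn ℝ Set.univ M)
    (hMxk : M xk = F xk)
    (herr : ∀ x, F x - M x ≤ (LU / 2) * ‖x - xk‖ ^ 2)
    (hmin : ∀ x, M xplus + (1 / 2) * (inner ℝ (Q (xplus - xk)) (xplus - xk) : ℝ)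
              ≤ M x + (1 / 2) * (inner ℝ (Q (x - xk)) (x - xk) : ℝ))
    (hα₁' : α₁ < 1)
    (hσ : σ ≥ LU / (2 - α₁))
    (hPred : 0 < F xk - M xplus - (1 / 2) * (inner ℝ (Q (xplus - xk)) (xplus - xk) : ℝ)) :
    (F xk - F xplus) /
      (F xk - M xplus - (1 / 2) * (inner ℝ (Q (xplus - xk)) (xplus - xk) : ℝ)) ≥ α₁ := by
  set s := xplus - xk
  set q := ⟪Q s, s⟫
  have hpred_ge : q / 2 ≤ F xk - M xplus - 1 / 2 * q := by
    have hdescent := hMconv.add_inner_le_of_forall_prox_le (Q : _ →ₗ[ℝ] _) hmin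
    simp only [ContinuousLinearMap.coe_coe] at hdescent
    linarith
  have hLU : LU ≤ (2 - α₁) * σ := by
    rwa [ge_iff_le, div_le_iff₀ (by linarith), mul_comm] at hσ
  have hmodel : F xplus - M xplus ≤ (2 - α₁) / 2 * q := calc
    F xplus - M xplus ≤ LU / 2 * ‖s‖ ^ 2 := herr xplus
    _ ≤ (2 - α₁) / 2 * (σ * ‖s‖ ^ 2) := by
      linarith [mul_le_mul_of_nonneg_right hLU (sq_nonneg ‖s‖)]
    _ ≤ (2 - α₁) / 2 * q := mul_le_mul_of_nonneg_left (hσmin s) (by linarith)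
  rw [ge_iff_le, le_div_iff₀ hPred]
  linarith [mul_le_mul_of_nonneg_left hpred_ge (by linarith : (0 : ℝ) ≤ 1 - α₁)]

/-- Sufficient condition for step acceptance. Under the upper quadratic model
error bound with constant `L_U`, if the smallest eigenvalue `σ` of the positive definite
metric `Q` satisfies `σ ≥ L_U / (2 - α₁)`, then the acceptance ratio `Act/Pred ≥ α₁`. -/
theorem stmt4 {m : ℕ}
    (F M : EuclideanSpace ℝ (Fin m) → ℝ)
    (Q : EuclideanSpace ℝ (Fin m) →L[ℝ] EuclideanSpace ℝ (Fin m))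
    (xk xplus : EuclideanSpace ℝ (Fin m)) (LU σ α₁ : ℝ)
    (hQsym : ∀ u v, (inner ℝ (Q u) v : ℝ) = inner ℝ u (Q v))
    (hσpos : 0 < σ)
    (hσmin : ∀ u, σ * ‖u‖ ^ 2 ≤ (inner ℝ (Q u) u : ℝ))   -- σ = λ_min(Q) lower bound
    (hMconv : ConvexOn ℝ Set.univ M)
    (hMxk : M xk = F xk)
    (hLU : 0 ≤ LU)
    (herr : ∀ x, F x - M x ≤ (LU / 2) * ‖x - xk‖ ^ 2)
    (hmin : ∀ x, M xplus + (1 / 2) * (inner ℝ (Q (xplus - xk)) (xplus - xk) : ℝ)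
              ≤ M x + (1 / 2) * (inner ℝ (Q (x - xk)) (x - xk) : ℝ))
    (hα₁ : 0 < α₁) (hα₁' : α₁ < 1)
    (hσ : σ ≥ LU / (2 - α₁))
    (hPred : 0 < F xk - M xplus - (1 / 2) * (inner ℝ (Q (xplus - xk)) (xplus - xk) : ℝ)) :
    (F xk - F xplus) /
      (F xk - M xplus - (1 / 2) * (inner ℝ (Q (xplus - xk)) (xplus - xk) : ℝ)) ≥ α₁ :=
  stmt4_general F M Q xk xplus LU σ α₁ hσmin hMconv hMxk herr hmin hα₁' hσ hPred
end

section
/- Under the two-sided model error bound −(L_L/2)‖y − x_k‖² ≤ F(y) − M(y) ≤ (L_U/2)‖y − x_k‖², with x⁺ the minimizer of M + (1/2)‖·−x_k‖²_Q, G := Q(x_k − x⁺), and σ := λ_min(Q), the following holds for all y: F(y) ≥ F(x⁺) + ⟨G, y − x_k⟩ + (1 − L_U/(2σ))⟨Q⁻¹G, G⟩ − (L_L/2)‖y − x_k‖². In particular, taking y = x_k gives F(x_k) − F(x⁺) ≥ (1/2)(2 − L_U/σ)‖x⁺ − x_k‖²_Q. -/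
/-!
Since `x⁺` minimizes the convex function `M + ½‖· - x_k‖²_Q`, the vector `G = Q(x_k - x⁺)` is a
subgradient of `M` at `x⁺`. The lower model bound at `y`, this subgradient inequality, and the
upper model bound at `x⁺` (with `‖x⁺ - x_k‖² ≤ σ⁻¹‖x⁺ - x_k‖²_Q`) chain into the claim, which at
`y = x_k` is the sufficient-decrease estimate.
-/

open Filter Topology

lemma le_of_forall_le_add_mul {a b c : ℝ} (h : ∀ t : ℝ, 0 < t → t ≤ 1 → a ≤ b + t * c) :
    a ≤ b := by
  have hlim : Tendsto (fun t : ℝ => b + t * c) (𝓝[>] 0) (𝓝 b) := by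
    apply tendsto_nhdsWithin_of_tendsto_nhds
    simpa using ((continuous_id.mul continuous_const).const_add b).tendsto (0 : ℝ)
  refine ge_of_tendsto hlim ?_
  filter_upwards [Ioo_mem_nhdsGT (zero_lt_one' ℝ)] with t ht using h t ht.1 ht.2.le

section Prox

variable {E : Type*} [NormedAddCommGroup E] [InnerProductSpace ℝ E]

lemma LinearMap.IsSymmetric.inner_map_add_smul_self {Q : E →L[ℝ] E}
    (hQ : (Q : E →ₗ[ℝ] E).IsSymmetric) (d u : E) (t : ℝ) :
    inner ℝ (Q (d + t • u)) (d + t • u)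
      = inner ℝ (Q d) d + 2 * t * inner ℝ (Q d) u + t ^ 2 * inner ℝ (Q u) u := by
  have hswap : inner ℝ (Q u) d = inner ℝ (Q d) u := by
    rw [show inner ℝ (Q u) d = inner ℝ u (Q d) from hQ u d, real_inner_comm]
  simp only [map_add, map_smul, inner_add_left, inner_add_right,
    real_inner_smul_left, real_inner_smul_right]
  linear_combination t * hswap

lemma ConvexOn.add_inner_le_of_prox_min {f : E → ℝ} (hf : ConvexOn ℝ Set.univ f)
    {Q : E →L[ℝ] E} (hQ : (Q : E →ₗ[ℝ] E).IsSymmetric) {a z : E}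
    (hz : ∀ x, f z + (1 / 2) * inner ℝ (Q (z - a)) (z - a)
      ≤ f x + (1 / 2) * inner ℝ (Q (x - a)) (x - a)) (x : E) :
    f z + inner ℝ (Q (a - z)) (x - z) ≤ f x := by
  set d := z - a
  set u := x - z
  have hQneg : inner ℝ (Q (a - z)) u = -inner ℝ (Q d) u := by
    rw [← inner_neg_left, ← map_neg, neg_sub]
  rw [hQneg]
  -- Compare `z` with `z + t • u`: convexity and minimality give the claim up to `O(t)`.
  refine le_of_forall_le_add_mul (c := inner ℝ (Q u) u / 2) fun t ht ht1 => ?_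
  have hconv : f (z + t • u) ≤ (1 - t) * f z + t * f x := by
    have hpt : z + t • u = (1 - t) • z + t • x := by simp only [u]; module
    simpa only [hpt, smul_eq_mul] using
      hf.2 (Set.mem_univ z) (Set.mem_univ x) (by linarith) ht.le (by ring)
  have hmin := hz (z + t • u)
  rw [show z + t • u - a = d + t • u by simp only [d]; abel,
    hQ.inner_map_add_smul_self] at hmin
  have hscaled : t * (f z - inner ℝ (Q d) u - f x) ≤ t * (t * (inner ℝ (Q u) u / 2)) := by
    nlinarith
  nlinarith [le_of_mul_le_mul_left hscaled ht]

end Prox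

theorem stmt11_general {m : ℕ}
    (F M : EuclideanSpace ℝ (Fin m) → ℝ)
    (Q : EuclideanSpace ℝ (Fin m) →L[ℝ] EuclideanSpace ℝ (Fin m))
    (xk xplus : EuclideanSpace ℝ (Fin m)) (LU LL σ : ℝ)
    (hQsym : ∀ u v, (inner ℝ (Q u) v : ℝ) = inner ℝ u (Q v))
    (hσpos : 0 < σ)
    (hσmin : ∀ u, σ * ‖u‖ ^ 2 ≤ (inner ℝ (Q u) u : ℝ))
    (hMconv : ConvexOn ℝ Set.univ M)
    (hLU : 0 ≤ LU)
    (herrU : ∀ y, F y - M y ≤ (LU / 2) * ‖y - xk‖ ^ 2)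
    (herrL : ∀ y, -(LL / 2) * ‖y - xk‖ ^ 2 ≤ F y - M y)
    (hmin : ∀ x, M xplus + (1 / 2) * (inner ℝ (Q (xplus - xk)) (xplus - xk) : ℝ)
              ≤ M x + (1 / 2) * (inner ℝ (Q (x - xk)) (x - xk) : ℝ)) :
    (∀ y, F y ≥ F xplus + (inner ℝ (Q (xk - xplus)) (y - xk) : ℝ)
          + (1 - LU / (2 * σ)) * (inner ℝ (xk - xplus) (Q (xk - xplus)) : ℝ)
          - (LL / 2) * ‖y - xk‖ ^ 2) ∧
    F xk - F xplus ≥ (1 / 2) * (2 - LU / σ) * (inner ℝ (Q (xplus - xk)) (xplus - xk) : ℝ) := by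
  set c := inner ℝ (Q (xk - xplus)) (xk - xplus)
  have hc_comm : inner ℝ (xk - xplus) (Q (xk - xplus)) = c := real_inner_comm _ _
  have hc_neg : inner ℝ (Q (xplus - xk)) (xplus - xk) = c := by
    rw [← neg_sub xk xplus, map_neg, inner_neg_neg]
  have hupper : F xplus - M xplus ≤ LU / (2 * σ) * c := by
    have hnorm : ‖xplus - xk‖ ^ 2 ≤ c / σ := by
      rw [le_div_iff₀ hσpos, norm_sub_rev]
      linarith [hσmin (xk - xplus)]
    have hbound : LU / 2 * ‖xplus - xk‖ ^ 2 ≤ LU / (2 * σ) * c := by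
      rw [show LU / (2 * σ) * c = LU / 2 * (c / σ) by ring]
      exact mul_le_mul_of_nonneg_left hnorm (by positivity)
    linarith [herrU xplus, hbound]
  have hmain : ∀ y, F y ≥ F xplus + inner ℝ (Q (xk - xplus)) (y - xk)
      + (1 - LU / (2 * σ)) * inner ℝ (xk - xplus) (Q (xk - xplus)) - LL / 2 * ‖y - xk‖ ^ 2 := by
    intro y
    have hsub := hMconv.add_inner_le_of_prox_min hQsym hmin y
    rw [← sub_add_sub_cancel y xk xplus, inner_add_right] at hsub
    rw [hc_comm]
    linarith [herrL y]
  refine ⟨hmain, ?_⟩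
  have hxk := hmain xk
  simp only [sub_self, inner_zero_right, norm_zero, hc_comm] at hxk
  rw [hc_neg, show (1 / 2) * (2 - LU / σ) = 1 - LU / (2 * σ) by ring]
  linarith

/-- Gradient inequality for prox-convex under two-sided quadratic model error
bounds: for all `y`,
`F y ≥ F x⁺ + ⟪G, y - x_k⟫ + (1 - L_U/(2σ))⟪Q⁻¹G, G⟫ - (L_L/2)‖y - x_k‖²`,
with `G = Q(x_k - x⁺)`, `Q⁻¹G = x_k - x⁺`, and in particular (at `y = x_k`)
`F x_k - F x⁺ ≥ ½(2 - L_U/σ)‖x⁺ - x_k‖²_Q`. -/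
theorem stmt11 {m : ℕ}
    (F M : EuclideanSpace ℝ (Fin m) → ℝ)
    (Q : EuclideanSpace ℝ (Fin m) →L[ℝ] EuclideanSpace ℝ (Fin m))
    (xk xplus : EuclideanSpace ℝ (Fin m)) (LU LL σ : ℝ)
    (hQsym : ∀ u v, (inner ℝ (Q u) v : ℝ) = inner ℝ u (Q v))
    (hσpos : 0 < σ)
    (hσmin : ∀ u, σ * ‖u‖ ^ 2 ≤ (inner ℝ (Q u) u : ℝ))
    (hMconv : ConvexOn ℝ Set.univ M)
    (hMxk : M xk = F xk)
    (hLU : 0 ≤ LU) (hLL : LU ≤ LL)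
    (herrU : ∀ y, F y - M y ≤ (LU / 2) * ‖y - xk‖ ^ 2)
    (herrL : ∀ y, -(LL / 2) * ‖y - xk‖ ^ 2 ≤ F y - M y)
    (hmin : ∀ x, M xplus + (1 / 2) * (inner ℝ (Q (xplus - xk)) (xplus - xk) : ℝ)
              ≤ M x + (1 / 2) * (inner ℝ (Q (x - xk)) (x - xk) : ℝ)) :
    (∀ y, F y ≥ F xplus + (inner ℝ (Q (xk - xplus)) (y - xk) : ℝ)
          + (1 - LU / (2 * σ)) * (inner ℝ (xk - xplus) (Q (xk - xplus)) : ℝ)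
          - (LL / 2) * ‖y - xk‖ ^ 2) ∧
    F xk - F xplus ≥ (1 / 2) * (2 - LU / σ) * (inner ℝ (Q (xplus - xk)) (xplus - xk) : ℝ) :=
  stmt11_general F M Q xk xplus LU LL σ hQsym hσpos hσmin hMconv hLU herrU herrL hmin
end

section
/- Let h : ℝ^d → ℝ be C¹ with β_h-Lipschitz gradient and ‖∇h‖ ≤ L_h, and let C : ℝ^m → ℝ^d be L_C-Lipschitz and C² with each ∇²C_i having γ_C-Lipschitz dependence and ‖Σᵢ vᵢ∇²Cᵢ(x)‖ ≤ β_C‖v‖. Let J_k := J_C(x_k), y := ∇h(C(x_k)), H := Σᵢ yᵢ ∇²Cᵢ(x_k), and define the Hessian-augmented model m(x) := h(C(x_k) + J_k d) + (1/2)dᵀHd with d = x − x_k. Then |h(C(x)) − m(x)| ≤ M₃‖d‖³ + M₄‖d‖⁴ for x near x_k, where M₃ = L_h γ_C/6 + β_h L_C β_C/2 and M₄ = β_h β_C²/8 + β_h L_C γ_C/6. -/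
/-!
Write `d = x - x_k`, `a = C(x_k) + J_k d` and `e = C(x) - a`. Along the segment `t ↦ x_k + t d`,
Taylor's formula with a Lipschitz top derivative gives `‖e‖ ≤ β_C ‖d‖² / 2` and
`‖e - ½ q(d)‖ ≤ γ_C ‖d‖³ / 6`. Then
`h(a + e) - h(a) - ½ ⟪y, q(d)⟫ = [h(a + e) - h(a) - ⟪∇h(a), e⟫] + ⟪∇h(a) - y, e⟫ + ⟪y, e - ½ q(d)⟫`:
the first bracket is at most `β_h ‖e‖² / 2` by the descent lemma, the second at most
`β_h L_C ‖d‖ ‖e‖`, the third at most `L_h γ_C ‖d‖³ / 6`.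
-/

open Set
open scoped RealInnerProductSpace

section Curve

variable {F : Type*} [NormedAddCommGroup F] [NormedSpace ℝ F]

theorem norm_sub_le_of_norm_deriv_le_mul_pow {g g' : ℝ → F} {K : ℝ} (n : ℕ)
    (hg : ∀ t, HasDerivAt g (g' t) t) (hbound : ∀ t ∈ Icc (0 : ℝ) 1, ‖g' t‖ ≤ K * t ^ n)
    {t : ℝ} (ht : t ∈ Icc (0 : ℝ) 1) : ‖g t - g 0‖ ≤ K * t ^ (n + 1) / (n + 1) := by
  have hB (s : ℝ) : HasDerivAt (fun s => K * s ^ (n + 1) / (n + 1)) (K * s ^ n) s := by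
    refine (((hasDerivAt_pow (n + 1) s).const_mul K).div_const ((n : ℝ) + 1)).congr_deriv ?_
    push_cast
    field_simp
  exact image_norm_le_of_norm_deriv_right_le_deriv_boundary (f := fun s => g s - g 0)
    (fun s _ => ((hg s).sub_const _).continuousAt.continuousWithinAt)
    (fun s _ => ((hg s).sub_const _).hasDerivWithinAt) (by simp) hB
    (fun s hs => hbound s (Ico_subset_Icc_self hs)) ht

theorem norm_sub_sub_deriv_le {g g' : ℝ → F} {K : ℝ} (hg : ∀ t, HasDerivAt g (g' t) t)
    (hK : ∀ t ∈ Icc (0 : ℝ) 1, ‖g' t - g' 0‖ ≤ K * t) : ‖g 1 - g 0 - g' 0‖ ≤ K / 2 := by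
  have hG (t : ℝ) : HasDerivAt (fun t => g t - t • g' 0) (g' t - g' 0) t :=
    ((hg t).sub ((hasDerivAt_id' t).smul_const (g' 0))).congr_deriv (by rw [one_smul])
  convert norm_sub_le_of_norm_deriv_le_mul_pow 1 hG (by simpa using hK)
    (right_mem_Icc.2 zero_le_one) using 1
  · simp only [one_smul, zero_smul, sub_zero, sub_right_comm]
  · norm_num

theorem norm_sub_sub_deriv_le_of_norm_deriv2_le {c c' c'' : ℝ → F} {M : ℝ}
    (hc : ∀ t, HasDerivAt c (c' t) t) (hc' : ∀ t, HasDerivAt c' (c'' t) t)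
    (hM : ∀ t ∈ Icc (0 : ℝ) 1, ‖c'' t‖ ≤ M) : ‖c 1 - c 0 - c' 0‖ ≤ M / 2 :=
  norm_sub_sub_deriv_le hc fun t ht => by
    simpa using norm_sub_le_of_norm_deriv_le_mul_pow 0 hc' (by simpa using hM) ht

theorem norm_taylor_two_le {c c' c'' : ℝ → F} {K : ℝ}
    (hc : ∀ t, HasDerivAt c (c' t) t) (hc' : ∀ t, HasDerivAt c' (c'' t) t)
    (hK : ∀ t ∈ Icc (0 : ℝ) 1, ‖c'' t - c'' 0‖ ≤ K * t) :
    ‖c 1 - c 0 - c' 0 - (1 / 2 : ℝ) • c'' 0‖ ≤ K / 6 := by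
  have hG (t : ℝ) : HasDerivAt (fun t => c' t - t • c'' 0) (c'' t - c'' 0) t :=
    ((hc' t).sub ((hasDerivAt_id' t).smul_const (c'' 0))).congr_deriv (by rw [one_smul])
  have hH (t : ℝ) : HasDerivAt (fun t => c t - t • c' 0 - (t ^ 2 / 2) • c'' 0)
      (c' t - c' 0 - t • c'' 0) t := by
    refine (((hc t).sub ((hasDerivAt_id' t).smul_const (c' 0))).sub
      (((hasDerivAt_pow 2 t).div_const 2).smul_const (c'' 0))).congr_deriv ?_
    norm_num
  have hH' (t : ℝ) (ht : t ∈ Icc (0 : ℝ) 1) : ‖c' t - c' 0 - t • c'' 0‖ ≤ K / 2 * t ^ 2 := by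
    convert norm_sub_le_of_norm_deriv_le_mul_pow 1 hG (by simpa using hK) ht using 1
    · simp only [zero_smul, sub_zero, sub_right_comm]
    · ring
  convert norm_sub_le_of_norm_deriv_le_mul_pow 2 hH hH' (right_mem_Icc.2 zero_le_one) using 1
  · congr 1
    simp only [one_smul, zero_smul, sub_zero]
    norm_num
    abel
  · ring

end Curve

section SecondOrder

variable {E F : Type*} [NormedAddCommGroup E] [NormedSpace ℝ E]
  [NormedAddCommGroup F] [NormedSpace ℝ F] {C : E → F}

theorem hasDerivAt_comp_add_smul (hC : Differentiable ℝ C) (x d : E) (t : ℝ) :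
    HasDerivAt (fun t : ℝ => C (x + t • d)) (fderiv ℝ C (x + t • d) d) t := by
  have hline : HasDerivAt (fun t : ℝ => x + t • d) d t := by
    simpa using ((hasDerivAt_id t).smul_const d).const_add x
  exact (hC _).hasFDerivAt.comp_hasDerivAt t hline

theorem hasDerivAt_fderiv_comp_add_smul (hC : ContDiff ℝ 2 C) (x d : E) (t : ℝ) :
    HasDerivAt (fun t : ℝ => fderiv ℝ C (x + t • d) d)
      (iteratedFDeriv ℝ 2 C (x + t • d) ![d, d]) t := by
  have hDC : Differentiable ℝ (fderiv ℝ C) :=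
    (hC.fderiv_right (m := 1) (by norm_num)).differentiable (by norm_num)
  simpa [iteratedFDeriv_two_apply] using
    (hasDerivAt_comp_add_smul hDC x d t).clm_apply (hasDerivAt_const t d)

theorem norm_sub_sub_fderiv_le (hC : ContDiff ℝ 2 C) {β : ℝ}
    (hB : ∀ x u w, ‖iteratedFDeriv ℝ 2 C x ![u, w]‖ ≤ β * ‖u‖ * ‖w‖) (x₀ x : E) :
    ‖C x - C x₀ - fderiv ℝ C x₀ (x - x₀)‖ ≤ β / 2 * ‖x - x₀‖ ^ 2 := by
  have := norm_sub_sub_deriv_le_of_norm_deriv2_le (M := β * ‖x - x₀‖ ^ 2)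
    (hasDerivAt_comp_add_smul (hC.differentiable (by norm_num)) x₀ (x - x₀))
    (hasDerivAt_fderiv_comp_add_smul hC x₀ (x - x₀))
    (fun t _ => (hB _ _ _).trans_eq (by ring))
  simpa [mul_div_right_comm] using this

theorem norm_sub_sub_fderiv_sub_half_iteratedFDeriv_le (hC : ContDiff ℝ 2 C) {γ : ℝ}
    (hL : ∀ x z u w, ‖iteratedFDeriv ℝ 2 C x ![u, w] - iteratedFDeriv ℝ 2 C z ![u, w]‖
      ≤ γ * ‖x - z‖ * ‖u‖ * ‖w‖) (x₀ x : E) :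
    ‖C x - C x₀ - fderiv ℝ C x₀ (x - x₀)
        - (1 / 2 : ℝ) • iteratedFDeriv ℝ 2 C x₀ ![x - x₀, x - x₀]‖
      ≤ γ / 6 * ‖x - x₀‖ ^ 3 := by
  have := norm_taylor_two_le (K := γ * ‖x - x₀‖ ^ 3)
    (hasDerivAt_comp_add_smul (hC.differentiable (by norm_num)) x₀ (x - x₀))
    (hasDerivAt_fderiv_comp_add_smul hC x₀ (x - x₀))
    (fun t ht => (hL _ _ _ _).trans_eq (by
      rw [zero_smul, add_zero, add_sub_cancel_left, norm_smul, Real.norm_of_nonneg ht.1]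
      ring))
  simpa [mul_div_right_comm] using this

end SecondOrder

section Gradient

variable {H : Type*} [NormedAddCommGroup H] [InnerProductSpace ℝ H] [CompleteSpace H]
  {f : H → ℝ} {f' : H → H} {β : ℝ}

theorem abs_sub_sub_inner_le_of_lipschitz_gradient (hf : ∀ u, HasGradientAt f (f' u) u)
    (hL : ∀ u v, ‖f' u - f' v‖ ≤ β * ‖u - v‖) (a e : H) :
    |f (a + e) - f a - ⟪f' a, e⟫| ≤ β / 2 * ‖e‖ ^ 2 := by
  have hline (t : ℝ) : HasDerivAt (fun t : ℝ => f (a + t • e)) ⟪f' (a + t • e), e⟫ t := by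
    have h := (hf (a + t • e)).hasFDerivAt.comp_hasDerivAt t
      (((hasDerivAt_id' t).smul_const e).const_add a)
    rw [one_smul, InnerProductSpace.toDual_apply_apply] at h
    exact h
  have := norm_sub_sub_deriv_le (K := β * ‖e‖ ^ 2) hline fun t ht => by
    rw [← inner_sub_left]
    refine (norm_inner_le_norm _ _).trans ?_
    calc ‖f' (a + t • e) - f' (a + (0 : ℝ) • e)‖ * ‖e‖ ≤ β * ‖t • e‖ * ‖e‖ := by
          gcongr
          simpa using hL (a + t • e) a
      _ = β * ‖e‖ ^ 2 * t := by rw [norm_smul, Real.norm_of_nonneg ht.1]; ring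
  simpa [mul_div_right_comm] using this

theorem abs_sub_add_half_inner_le (hf : ∀ u, HasGradientAt f (f' u) u)
    (hL : ∀ u v, ‖f' u - f' v‖ ≤ β * ‖u - v‖) (b a e q : H) :
    |f (a + e) - (f a + 1 / 2 * ⟪f' b, q⟫)|
      ≤ β / 2 * ‖e‖ ^ 2 + ‖f' a - f' b‖ * ‖e‖ + ‖f' b‖ * ‖e - (1 / 2 : ℝ) • q‖ := by
  have hsplit : f (a + e) - (f a + 1 / 2 * ⟪f' b, q⟫)
      = (f (a + e) - f a - ⟪f' a, e⟫) + ⟪f' a - f' b, e⟫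
        + ⟪f' b, e - (1 / 2 : ℝ) • q⟫ := by
    rw [inner_sub_left, inner_sub_right, real_inner_smul_right]
    ring
  rw [hsplit]
  refine (abs_add_three _ _ _).trans ?_
  gcongr
  · exact abs_sub_sub_inner_le_of_lipschitz_gradient hf hL a e
  · exact abs_real_inner_le_norm _ _
  · exact abs_real_inner_le_norm _ _

end Gradient

section EuclideanCoordinates

variable {E : Type*} [NormedAddCommGroup E] [NormedSpace ℝ E] {ι : Type*} [Fintype ι]

theorem iteratedFDeriv_euclidean_coord {f : E → EuclideanSpace ℝ ι} {n : ℕ} {x : E}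
    (hf : ContDiffAt ℝ n f x) (i : ι) (v : Fin n → E) :
    iteratedFDeriv ℝ n (fun z => f z i) x v = iteratedFDeriv ℝ n f x v i := by
  change iteratedFDeriv ℝ n (EuclideanSpace.proj i ∘ f) x v = _
  rw [ContinuousLinearMap.iteratedFDeriv_comp_left _ hf le_rfl]
  rfl

theorem sum_mul_iteratedFDeriv_euclidean_coord {f : E → EuclideanSpace ℝ ι} {n : ℕ}
    (hf : ContDiff ℝ n f) (w : EuclideanSpace ℝ ι) (x : E) (v : Fin n → E) :
    ∑ i, w i * iteratedFDeriv ℝ n (fun z => f z i) x v = ⟪w, iteratedFDeriv ℝ n f x v⟫ := by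
  simp only [PiLp.inner_apply, iteratedFDeriv_euclidean_coord hf.contDiffAt, RCLike.inner_apply,
    conj_trivial, mul_comm]

theorem sum_mul_sub_iteratedFDeriv_euclidean_coord {f : E → EuclideanSpace ℝ ι} {n : ℕ}
    (hf : ContDiff ℝ n f) (w : EuclideanSpace ℝ ι) (x z : E) (v : Fin n → E) :
    ∑ i, w i * (iteratedFDeriv ℝ n (fun z' => f z' i) x v
        - iteratedFDeriv ℝ n (fun z' => f z' i) z v)
      = ⟪w, iteratedFDeriv ℝ n f x v - iteratedFDeriv ℝ n f z v⟫ := by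
  simp only [mul_sub, Finset.sum_sub_distrib, sum_mul_iteratedFDeriv_euclidean_coord hf,
    inner_sub_right]

end EuclideanCoordinates

theorem norm_le_of_forall_abs_inner_le {H : Type*} [NormedAddCommGroup H]
    [InnerProductSpace ℝ H] {y : H} {c : ℝ} (hc : 0 ≤ c) (h : ∀ v, |⟪v, y⟫| ≤ c * ‖v‖) :
    ‖y‖ ≤ c := by
  rw [← innerSL_apply_norm ℝ y]
  exact (innerSL ℝ y).opNorm_le_bound hc fun v => by
    rw [innerSL_apply_apply, Real.norm_eq_abs, real_inner_comm]
    exact h v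

/-- Inner curvature cancellation. The Hessian-augmented model
`m(x) = h(C x_k + J_k d) + ½ dᵀHd` with `H = Σᵢ yᵢ ∇²Cᵢ(x_k)`, `y = ∇h(C x_k)`,
is third-order accurate: `|h(C x) - m(x)| ≤ M₃‖d‖³ + M₄‖d‖⁴` for `x` near `x_k`,
where `M₃ = L_h γ_C/6 + β_h L_C β_C/2` and `M₄ = β_h β_C²/8 + β_h L_C γ_C/6`. -/
theorem stmt17 {m d : ℕ}
    (h : EuclideanSpace ℝ (Fin d) → ℝ)
    (hg : EuclideanSpace ℝ (Fin d) → EuclideanSpace ℝ (Fin d))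
    (C : EuclideanSpace ℝ (Fin m) → EuclideanSpace ℝ (Fin d))
    (Lh βh LC βC γC : ℝ)
    (hLh : 0 ≤ Lh) (hβh : 0 ≤ βh) (hLC : 0 ≤ LC) (hβC : 0 ≤ βC) (hγC : 0 ≤ γC)
    (hh : ∀ u, HasGradientAt h (hg u) u)
    (hhgLip : ∀ u v, ‖hg u - hg v‖ ≤ βh * ‖u - v‖)
    (hhgBdd : ∀ u, ‖hg u‖ ≤ Lh)
    (hC2 : ContDiff ℝ 2 C)
    (hCLip : ∀ u v, ‖C u - C v‖ ≤ LC * ‖u - v‖)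
    (hHessBdd : ∀ x (v : EuclideanSpace ℝ (Fin d)) (u w : EuclideanSpace ℝ (Fin m)),
        |∑ i, v i * iteratedFDeriv ℝ 2 (fun z => C z i) x ![u, w]|
          ≤ βC * ‖v‖ * ‖u‖ * ‖w‖)
    (hHessLip : ∀ x z (v : EuclideanSpace ℝ (Fin d)) (u w : EuclideanSpace ℝ (Fin m)),
        |∑ i, v i * (iteratedFDeriv ℝ 2 (fun z' => C z' i) x ![u, w]
            - iteratedFDeriv ℝ 2 (fun z' => C z' i) z ![u, w])|
          ≤ γC * ‖v‖ * ‖x - z‖ * ‖u‖ * ‖w‖)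
    (xk : EuclideanSpace ℝ (Fin m)) :
    ∃ δ > (0 : ℝ), ∀ x, ‖x - xk‖ < δ →
      |h (C x) - (h (C xk + fderiv ℝ C xk (x - xk))
          + (1 / 2) * ∑ i, hg (C xk) i *
              iteratedFDeriv ℝ 2 (fun z => C z i) xk ![x - xk, x - xk])|
        ≤ (Lh * γC / 6 + βh * LC * βC / 2) * ‖x - xk‖ ^ 3
          + (βh * βC ^ 2 / 8 + βh * LC * γC / 6) * ‖x - xk‖ ^ 4 := by
  have hB : ∀ z u w, ‖iteratedFDeriv ℝ 2 C z ![u, w]‖ ≤ βC * ‖u‖ * ‖w‖ := fun z u w =>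
    norm_le_of_forall_abs_inner_le (by positivity) fun v => by
      rw [← sum_mul_iteratedFDeriv_euclidean_coord hC2]; linarith [hHessBdd z v u w]
  have hL : ∀ z z' u w, ‖iteratedFDeriv ℝ 2 C z ![u, w] - iteratedFDeriv ℝ 2 C z' ![u, w]‖
      ≤ γC * ‖z - z'‖ * ‖u‖ * ‖w‖ := fun z z' u w =>
    norm_le_of_forall_abs_inner_le (by positivity) fun v => by
      rw [← sum_mul_sub_iteratedFDeriv_euclidean_coord hC2]; linarith [hHessLip z z' v u w]
  refine ⟨1, one_pos, fun x _ => ?_⟩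
  have he := norm_sub_sub_fderiv_le hC2 hB xk x
  have hr := norm_sub_sub_fderiv_sub_half_iteratedFDeriv_le hC2 hL xk x
  set dx := x - xk
  have hJ : ‖fderiv ℝ C xk dx‖ ≤ LC * ‖dx‖ :=
    (fderiv ℝ C xk).le_of_opNorm_le
      (norm_fderiv_le_of_lip' ℝ hLC (.of_forall fun u => hCLip u xk)) dx
  have hgrad : ‖hg (C xk + fderiv ℝ C xk dx) - hg (C xk)‖ ≤ βh * (LC * ‖dx‖) := by
    refine (hhgLip _ _).trans ?_
    rw [add_sub_cancel_left]
    exact mul_le_mul_of_nonneg_left hJ hβh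
  have hmodel := abs_sub_add_half_inner_le hh hhgLip (C xk) (C xk + fderiv ℝ C xk dx)
    (C x - C xk - fderiv ℝ C xk dx) (iteratedFDeriv ℝ 2 C xk ![dx, dx])
  rw [show C xk + fderiv ℝ C xk dx + (C x - C xk - fderiv ℝ C xk dx) = C x by abel] at hmodel
  rw [sum_mul_iteratedFDeriv_euclidean_coord hC2]
  calc _ ≤ _ := hmodel
    _ ≤ βh / 2 * (βC / 2 * ‖dx‖ ^ 2) ^ 2 + βh * (LC * ‖dx‖) * (βC / 2 * ‖dx‖ ^ 2)
          + Lh * (γC / 6 * ‖dx‖ ^ 3) := by gcongr; exact hhgBdd _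
    _ ≤ _ := by
      have : 0 ≤ βh * LC * γC / 6 * ‖dx‖ ^ 4 := by positivity
      linear_combination this
end

section
/- Let s : ℝ^n → ℝ be C² with ‖∇²s‖ ≤ β_s and γ_s-Lipschitz Hessian, and R : ℝ^m → ℝ^n be C¹, L_R-Lipschitz with β_R-Lipschitz Jacobian. Let J := J_R(x_k), H := Jᵀ∇²s(R(x_k))J, and define m(x) := s(R(x_k)) + ∇s(R(x_k))ᵀ(R(x) − R(x_k)) + (1/2)dᵀHd with d = x − x_k. Then |s(R(x)) − m(x)| ≤ (β_s L_R β_R/2 + γ_s L_R³/6)‖d‖³ + (β_s β_R²/8)‖d‖⁴ for all x. -/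
/-!
Write `d = x - x_k`, `Δ = R x - R x_k` and `Δ = J d + e`. The second-order Taylor expansion of `s`
at `R x_k` in the direction `Δ` is accurate up to `γ_s ‖Δ‖³ / 6 ≤ γ_s L_R³ ‖d‖³ / 6`, and replacing
`⟪∇²s Δ, Δ⟫` by `⟪∇²s J d, J d⟫` costs at most `β_s (2 ‖J d‖ ‖e‖ + ‖e‖²)`, where `‖J d‖ ≤ L_R ‖d‖`
and the first-order Taylor remainder of `R` satisfies `‖e‖ ≤ β_R ‖d‖² / 2`. Both Taylor remainders
vanish at `t = 0` along the segment and have derivative at most `C t^k` there, so they are at most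
`C / (k + 1)` at `t = 1`.
-/

open Set
open scoped RealInnerProductSpace

theorem norm_le_div_of_norm_deriv_le_mul_pow {E : Type*} [NormedAddCommGroup E]
    [NormedSpace ℝ E] {φ φ' : ℝ → E} {C : ℝ} (k : ℕ) (hφ : ∀ t, HasDerivAt φ (φ' t) t)
    (hφ₀ : φ 0 = 0) (bound : ∀ t ∈ Ico (0 : ℝ) 1, ‖φ' t‖ ≤ C * t ^ k) :
    ‖φ 1‖ ≤ C / (k + 1) := by
  have hB : ∀ t : ℝ, HasDerivAt (fun t => C * t ^ (k + 1) / (k + 1)) (C * t ^ k) t := by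
    intro t
    refine (((hasDerivAt_pow (k + 1) t).const_mul C).div_const ((k : ℝ) + 1)).congr_deriv ?_
    rw [Nat.add_sub_cancel]
    push_cast
    field_simp
  simpa using image_norm_le_of_norm_deriv_right_le_deriv_boundary
    (fun t _ => (hφ t).continuousAt.continuousWithinAt) (fun t _ => (hφ t).hasDerivWithinAt)
    (by simp [hφ₀]) hB bound (right_mem_Icc.2 zero_le_one)

theorem norm_image_sub_sub_fderiv_le {E F : Type*} [NormedAddCommGroup E] [NormedSpace ℝ E]
    [NormedAddCommGroup F] [NormedSpace ℝ F] {f : E → F} {f' : E → E →L[ℝ] F} {L : ℝ}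
    (hf : ∀ u, HasFDerivAt f (f' u) u) (hf' : ∀ u v, ‖f' u - f' v‖ ≤ L * ‖u - v‖) (x y : E) :
    ‖f y - f x - f' x (y - x)‖ ≤ L / 2 * ‖y - x‖ ^ 2 := by
  set d := y - x
  have hφ : ∀ t : ℝ, HasDerivAt (fun t : ℝ => f (x + t • d) - f x - t • f' x d)
      ((f' (x + t • d) - f' x) d) t := by
    intro t
    refine (((hf _).comp_hasDerivAt t (((hasDerivAt_id t).smul_const d).const_add x)).sub_const
      (f x) |>.sub ((hasDerivAt_id t).smul_const (f' x d))).congr_deriv ?_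
    simp only [id, one_smul, sub_apply]
  have bound : ∀ t ∈ Ico (0 : ℝ) 1, ‖(f' (x + t • d) - f' x) d‖ ≤ L * ‖d‖ ^ 2 * t ^ 1 := by
    intro t ht
    calc ‖(f' (x + t • d) - f' x) d‖ ≤ ‖f' (x + t • d) - f' x‖ * ‖d‖ :=
          ContinuousLinearMap.le_opNorm _ _
      _ ≤ L * ‖x + t • d - x‖ * ‖d‖ := by gcongr; exact hf' _ _
      _ = L * ‖d‖ ^ 2 * t ^ 1 := by
        rw [add_sub_cancel_left, norm_smul, Real.norm_of_nonneg ht.1]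
        ring
  have := norm_le_div_of_norm_deriv_le_mul_pow 1 hφ (by simp) bound
  simp only [one_smul, Nat.cast_one] at this
  rw [show x + d = y from add_sub_cancel x y] at this
  linarith

theorem abs_sub_sub_inner_sub_half_inner_le {E : Type*} [NormedAddCommGroup E]
    [InnerProductSpace ℝ E] [CompleteSpace E] {s : E → ℝ} {sg : E → E} {Hs : E → E →L[ℝ] E}
    {γ : ℝ} (hs : ∀ u, HasGradientAt s (sg u) u) (hsg : ∀ u, HasFDerivAt sg (Hs u) u)
    (hHs : ∀ u v, ‖Hs u - Hs v‖ ≤ γ * ‖u - v‖) (x y : E) :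
    |s y - s x - ⟪sg x, y - x⟫ - 1 / 2 * ⟪Hs x (y - x), y - x⟫| ≤ γ / 6 * ‖y - x‖ ^ 3 := by
  set d := y - x
  have hφ : ∀ t : ℝ, HasDerivAt
      (fun t : ℝ => s (x + t • d) - s x - t * ⟪sg x, d⟫ - t ^ 2 / 2 * ⟪Hs x d, d⟫)
      ⟪sg (x + t • d) - sg x - Hs x (t • d), d⟫ t := by
    intro t
    have hs_line :=
      (hs _).hasFDerivAt.comp_hasDerivAt t (((hasDerivAt_id t).smul_const d).const_add x)
    refine (((hs_line.sub_const (s x)).sub ((hasDerivAt_id t).mul_const ⟪sg x, d⟫)).sub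
      (((hasDerivAt_pow 2 t).div_const 2).mul_const ⟪Hs x d, d⟫)).congr_deriv ?_
    simp only [InnerProductSpace.toDual_apply_apply, id, one_smul, one_mul, inner_sub_left,
      map_smul, real_inner_smul_left]
    ring
  have bound : ∀ t ∈ Ico (0 : ℝ) 1,
      ‖⟪sg (x + t • d) - sg x - Hs x (t • d), d⟫‖ ≤ γ / 2 * ‖d‖ ^ 3 * t ^ 2 := by
    intro t ht
    calc ‖⟪sg (x + t • d) - sg x - Hs x (t • d), d⟫‖
        ≤ ‖sg (x + t • d) - sg x - Hs x (t • d)‖ * ‖d‖ := norm_inner_le_norm _ _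
      _ ≤ γ / 2 * ‖t • d‖ ^ 2 * ‖d‖ := by
        gcongr
        simpa using norm_image_sub_sub_fderiv_le hsg hHs x (x + t • d)
      _ = γ / 2 * ‖d‖ ^ 3 * t ^ 2 := by
        rw [norm_smul, Real.norm_of_nonneg ht.1]
        ring
  have := norm_le_div_of_norm_deriv_le_mul_pow 2 hφ (by simp) bound
  simp only [one_smul, one_mul, one_pow] at this
  rw [show x + d = y from add_sub_cancel x y, Real.norm_eq_abs] at this
  convert this using 1
  norm_num
  ring

theorem abs_inner_map_add_sub_inner_map_le {E : Type*} [NormedAddCommGroup E]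
    [InnerProductSpace ℝ E] (A : E →L[ℝ] E) (a e : E) :
    |⟪A (a + e), a + e⟫ - ⟪A a, a⟫| ≤ ‖A‖ * (2 * ‖a‖ * ‖e‖ + ‖e‖ ^ 2) := by
  have hA : ∀ u v : E, |⟪A u, v⟫| ≤ ‖A‖ * ‖u‖ * ‖v‖ := fun u v =>
    (abs_real_inner_le_norm _ _).trans (by gcongr; exact A.le_opNorm u)
  have hexpand : ⟪A (a + e), a + e⟫ - ⟪A a, a⟫ = ⟪A a, e⟫ + ⟪A e, a⟫ + ⟪A e, e⟫ := by
    simp only [map_add, inner_add_left, inner_add_right]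
    ring
  rw [hexpand]
  calc |⟪A a, e⟫ + ⟪A e, a⟫ + ⟪A e, e⟫| ≤ |⟪A a, e⟫| + |⟪A e, a⟫| + |⟪A e, e⟫| :=
        abs_add_three _ _ _
    _ ≤ ‖A‖ * ‖a‖ * ‖e‖ + ‖A‖ * ‖e‖ * ‖a‖ + ‖A‖ * ‖e‖ * ‖e‖ := by
        gcongr <;> apply hA
    _ = ‖A‖ * (2 * ‖a‖ * ‖e‖ + ‖e‖ ^ 2) := by ring

theorem stmt18_general {m n : ℕ}
    (s : EuclideanSpace ℝ (Fin n) → ℝ)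
    (sg : EuclideanSpace ℝ (Fin n) → EuclideanSpace ℝ (Fin n))
    (Hs : EuclideanSpace ℝ (Fin n) → (EuclideanSpace ℝ (Fin n) →L[ℝ] EuclideanSpace ℝ (Fin n)))
    (R : EuclideanSpace ℝ (Fin m) → EuclideanSpace ℝ (Fin n))
    (J : EuclideanSpace ℝ (Fin m) → (EuclideanSpace ℝ (Fin m) →L[ℝ] EuclideanSpace ℝ (Fin n)))
    (βs γs LR βR : ℝ) (hβs : 0 ≤ βs) (hγs : 0 ≤ γs) (hLR : 0 ≤ LR)
    (hs : ∀ u, HasGradientAt s (sg u) u)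
    (hHess : ∀ u, HasFDerivAt sg (Hs u) u)
    (hHessBdd : ∀ u, ‖Hs u‖ ≤ βs)
    (hHessLip : ∀ u v, ‖Hs u - Hs v‖ ≤ γs * ‖u - v‖)
    (hR : ∀ u, HasFDerivAt R (J u) u)
    (hRLip : ∀ u v, ‖R u - R v‖ ≤ LR * ‖u - v‖)
    (hJLip : ∀ u v, ‖J u - J v‖ ≤ βR * ‖u - v‖)
    (xk : EuclideanSpace ℝ (Fin m)) :
    ∀ x, |s (R x) - (s (R xk) + (inner ℝ (sg (R xk)) (R x - R xk) : ℝ)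
          + (1 / 2) * (inner ℝ (Hs (R xk) (J xk (x - xk))) (J xk (x - xk)) : ℝ))|
      ≤ (βs * LR * βR / 2 + γs * LR ^ 3 / 6) * ‖x - xk‖ ^ 3
        + (βs * βR ^ 2 / 8) * ‖x - xk‖ ^ 4 := by
  intro x
  set d := x - xk
  set Δ := R x - R xk
  set e := Δ - J xk d
  have he : ‖e‖ ≤ βR / 2 * ‖d‖ ^ 2 := norm_image_sub_sub_fderiv_le hR hJLip xk x
  have hΔ : ‖Δ‖ ≤ LR * ‖d‖ := hRLip x xk
  have hJd : ‖J xk d‖ ≤ LR * ‖d‖ :=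
    (J xk).le_of_opNorm_le ((hR xk).le_of_lip' hLR (.of_forall fun u => hRLip u xk)) d
  have htaylor := abs_sub_sub_inner_sub_half_inner_le hs hHess hHessLip (R xk) (R x)
  have hquad := abs_inner_map_add_sub_inner_map_le (Hs (R xk)) (J xk d) e
  rw [add_sub_cancel] at hquad
  calc _ = |(s (R x) - s (R xk) - ⟪sg (R xk), Δ⟫ - 1 / 2 * ⟪Hs (R xk) Δ, Δ⟫)
          + 1 / 2 * (⟪Hs (R xk) Δ, Δ⟫ - ⟪Hs (R xk) (J xk d), J xk d⟫)| := by congr 1; ring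
    _ ≤ γs / 6 * ‖Δ‖ ^ 3 + 1 / 2 * (‖Hs (R xk)‖ * (2 * ‖J xk d‖ * ‖e‖ + ‖e‖ ^ 2)) := by
        refine (abs_add_le _ _).trans ?_
        rw [abs_mul, abs_of_pos (by norm_num : (0 : ℝ) < 1 / 2)]
        gcongr
    _ ≤ γs / 6 * (LR * ‖d‖) ^ 3
          + 1 / 2 * (βs * (2 * (LR * ‖d‖) * (βR / 2 * ‖d‖ ^ 2) + (βR / 2 * ‖d‖ ^ 2) ^ 2)) := by
        gcongr
        exact hHessBdd _
    _ = _ := by ring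

/-- Outer curvature cancellation. With `H = Jᵀ ∇²s(R x_k) J`, the model
`m(x) = s(R x_k) + ⟪∇s(R x_k), R x - R x_k⟫ + ½ dᵀHd` satisfies
`|s(R x) - m(x)| ≤ (β_s L_R β_R/2 + γ_s L_R³/6)‖d‖³ + (β_s β_R²/8)‖d‖⁴` for all `x`. -/
theorem stmt18 {m n : ℕ}
    (s : EuclideanSpace ℝ (Fin n) → ℝ)
    (sg : EuclideanSpace ℝ (Fin n) → EuclideanSpace ℝ (Fin n))
    (Hs : EuclideanSpace ℝ (Fin n) → (EuclideanSpace ℝ (Fin n) →L[ℝ] EuclideanSpace ℝ (Fin n)))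
    (R : EuclideanSpace ℝ (Fin m) → EuclideanSpace ℝ (Fin n))
    (J : EuclideanSpace ℝ (Fin m) → (EuclideanSpace ℝ (Fin m) →L[ℝ] EuclideanSpace ℝ (Fin n)))
    (βs γs LR βR : ℝ) (hβs : 0 ≤ βs) (hγs : 0 ≤ γs) (hLR : 0 ≤ LR) (hβR : 0 ≤ βR)
    (hs : ∀ u, HasGradientAt s (sg u) u)
    (hHess : ∀ u, HasFDerivAt sg (Hs u) u)
    (hHessBdd : ∀ u, ‖Hs u‖ ≤ βs)
    (hHessLip : ∀ u v, ‖Hs u - Hs v‖ ≤ γs * ‖u - v‖)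
    (hR : ∀ u, HasFDerivAt R (J u) u)
    (hRLip : ∀ u v, ‖R u - R v‖ ≤ LR * ‖u - v‖)
    (hJLip : ∀ u v, ‖J u - J v‖ ≤ βR * ‖u - v‖)
    (xk : EuclideanSpace ℝ (Fin m)) :
    ∀ x, |s (R x) - (s (R xk) + (inner ℝ (sg (R xk)) (R x - R xk) : ℝ)
          + (1 / 2) * (inner ℝ (Hs (R xk) (J xk (x - xk))) (J xk (x - xk)) : ℝ))|
      ≤ (βs * LR * βR / 2 + γs * LR ^ 3 / 6) * ‖x - xk‖ ^ 3
        + (βs * βR ^ 2 / 8) * ‖x - xk‖ ^ 4 :=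
  stmt18_general s sg Hs R J βs γs LR βR hβs hγs hLR hs hHess hHessBdd hHessLip hR hRLip hJLip xk
end
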